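/- (Zlotnik's inequality) Let T > 0, y ∈ W^{1,1}(0,T) solve y′(t) = g(y(t)) + b′(t) a.e. on [0,T] with y(0) = y₀, where b ∈ W^{1,1}(0,T) and g ∈ C(ℝ) with g(ξ) → −∞ as ξ → ∞. Suppose b(t₂) − b(t₁) ≤ N₀ + N₁(t₂ − t₁) for all 0 ≤ t₁ ≤ t₂ ≤ T, with N₀ ≥ 0, N₁ ≥ 0, and suppose ξ* ∈ ℝ satisfies g(ξ) ≤ −N₁ for all ξ ≥ ξ*. Then y(t) ≤ max{y₀, ξ*} + N₀ for all t ∈ [0,T]. -/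

import Mathlib

/-! Let `M = max y₀ ξ*` and let `t₁ ≤ t` be the last time with `y t₁ ≤ M`. On `(t₁, t]` we have
`y > M ≥ ξ*`, so `g ∘ y ≤ -N₁` there, and integrating the equation from `t₁` to `t` the drift
`-N₁ (t - t₁)` cancels the linear part of the growth bound on `b`, leaving `y t ≤ y t₁ + N₀ ≤ M + N₀`. -/

open MeasureTheory Set

theorem sub_eq_intervalIntegral_of_eq_add_integral {f F : ℝ → ℝ} {a c u v : ℝ}
    (hf : IntegrableOn f (Icc a c)) (hF : ∀ t ∈ Icc a c, F t = F a + ∫ s in a..t, f s)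
    (hu : u ∈ Icc a c) (hv : v ∈ Icc a c) :
    F v - F u = ∫ s in u..v, f s := by
  have hint : ∀ w ∈ Icc a c, IntervalIntegrable f volume a w := fun w hw =>
    (hf.mono_set (uIcc_subset_Icc (left_mem_Icc.2 (hw.1.trans hw.2)) hw)).intervalIntegrable
  rw [hF v hv, hF u hu, add_sub_add_left_eq_sub,
    intervalIntegral.integral_interval_sub_left (hint v hv) (hint u hu)]

theorem exists_last_le_of_continuousOn {y : ℝ → ℝ} {a t M : ℝ} (hy : ContinuousOn y (Icc a t))
    (hat : a ≤ t) (hya : y a ≤ M) :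
    ∃ t₁ ∈ Icc a t, y t₁ ≤ M ∧ ∀ s ∈ Ioc t₁ t, M < y s := by
  set S := Icc a t ∩ y ⁻¹' Iic M
  have hS : IsCompact S :=
    isCompact_Icc.of_isClosed_subset (hy.preimage_isClosed_of_isClosed isClosed_Icc isClosed_Iic)
      inter_subset_left
  obtain ⟨t₁, ⟨ht₁, hyt₁⟩, hmax⟩ := hS.exists_isGreatest ⟨a, ⟨left_mem_Icc.2 hat, hya⟩⟩
  refine ⟨t₁, ht₁, hyt₁, fun s hs => lt_of_not_ge fun hys => ?_⟩
  exact hs.1.not_ge (hmax ⟨⟨ht₁.1.trans hs.1.le, hs.2⟩, hys⟩)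

theorem intervalIntegral_le_mul_sub_of_le_on_Ioo {f : ℝ → ℝ} {a b c : ℝ} (hab : a ≤ b)
    (hf : IntervalIntegrable f volume a b) (h : ∀ s ∈ Ioo a b, f s ≤ c) :
    ∫ s in a..b, f s ≤ c * (b - a) := by
  calc ∫ s in a..b, f s ≤ ∫ _ in a..b, c :=
        intervalIntegral.integral_mono_on_of_le_Ioo hab hf intervalIntegrable_const h
    _ = c * (b - a) := by rw [intervalIntegral.integral_const, smul_eq_mul, mul_comm]

theorem stmt_4_general (T : ℝ) (g : ℝ → ℝ) (hg : Continuous g)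
    (y b : ℝ → ℝ) (b' : ℝ → ℝ)
    (hb'int : IntegrableOn b' (Set.Icc 0 T))
    (hy : ∀ t ∈ Set.Icc (0:ℝ) T, y t = y 0 + ∫ s in (0:ℝ)..t, (g (y s) + b' s))
    (hycont : ContinuousOn y (Set.Icc 0 T))
    (hb : ∀ t ∈ Set.Icc (0:ℝ) T, b t = b 0 + ∫ s in (0:ℝ)..t, b' s)
    (N₀ N₁ : ℝ)
    (hbincr : ∀ t₁ t₂ : ℝ, 0 ≤ t₁ → t₁ ≤ t₂ → t₂ ≤ T → b t₂ - b t₁ ≤ N₀ + N₁ * (t₂ - t₁))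
    (ξs : ℝ) (hξs : ∀ ξ : ℝ, ξs ≤ ξ → g ξ ≤ -N₁) :
    ∀ t ∈ Set.Icc (0:ℝ) T, y t ≤ max (y 0) ξs + N₀ := by
  intro t ht
  obtain ⟨t₁, ht₁, hyt₁, hy_gt⟩ := exists_last_le_of_continuousOn
    (hycont.mono (Icc_subset_Icc_right ht.2)) ht.1 (le_max_left (y 0) ξs)
  have ht₁T : t₁ ∈ Icc 0 T := ⟨ht₁.1, ht₁.2.trans ht.2⟩
  have hgy : IntegrableOn (fun s => g (y s)) (Icc 0 T) :=
    (hg.comp_continuousOn hycont).integrableOn_Icc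
  have hgy_le : ∀ s ∈ Ioo t₁ t, g (y s) ≤ -N₁ := fun s hs =>
    hξs _ ((le_max_right _ _).trans (hy_gt s (Ioo_subset_Ioc_self hs)).le)
  have hgy_int : IntervalIntegrable (fun s => g (y s)) volume t₁ t :=
    (hgy.mono_set (uIcc_subset_Icc ht₁T ht)).intervalIntegrable
  have hb'_int : IntervalIntegrable b' volume t₁ t :=
    (hb'int.mono_set (uIcc_subset_Icc ht₁T ht)).intervalIntegrable
  have hy_incr : y t - y t₁ = ∫ s in t₁..t, (g (y s) + b' s) :=
    sub_eq_intervalIntegral_of_eq_add_integral (hgy.add hb'int) hy ht₁T ht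
  rw [intervalIntegral.integral_add hgy_int hb'_int,
    ← sub_eq_intervalIntegral_of_eq_add_integral hb'int hb ht₁T ht] at hy_incr
  have hdrift := intervalIntegral_le_mul_sub_of_le_on_Ioo ht₁.2 hgy_int hgy_le
  linarith [hbincr t₁ t ht₁.1 ht₁.2 ht.2]

/-- Zlotnik's inequality: if y ∈ W^{1,1}(0,T) solves y' = g(y) + b' with g continuous,
g(ξ) → -∞ as ξ → ∞, b(t₂) - b(t₁) ≤ N₀ + N₁(t₂ - t₁), and g(ξ) ≤ -N₁ for ξ ≥ ξ*,
then y(t) ≤ max{y₀, ξ*} + N₀ on [0,T]. -/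
theorem stmt_4 (T : ℝ) (hT : 0 < T) (g : ℝ → ℝ) (hg : Continuous g)
    (hglim : Filter.Tendsto g Filter.atTop Filter.atBot)
    (y b : ℝ → ℝ) (b' : ℝ → ℝ)
    (hb'int : IntegrableOn b' (Set.Icc 0 T))
    (hy : ∀ t ∈ Set.Icc (0:ℝ) T, y t = y 0 + ∫ s in (0:ℝ)..t, (g (y s) + b' s))
    (hycont : ContinuousOn y (Set.Icc 0 T))
    (hb : ∀ t ∈ Set.Icc (0:ℝ) T, b t = b 0 + ∫ s in (0:ℝ)..t, b' s)
    (N₀ N₁ : ℝ) (hN₀ : 0 ≤ N₀) (hN₁ : 0 ≤ N₁)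
    (hbincr : ∀ t₁ t₂ : ℝ, 0 ≤ t₁ → t₁ ≤ t₂ → t₂ ≤ T → b t₂ - b t₁ ≤ N₀ + N₁ * (t₂ - t₁))
    (ξs : ℝ) (hξs : ∀ ξ : ℝ, ξs ≤ ξ → g ξ ≤ -N₁) :
    ∀ t ∈ Set.Icc (0:ℝ) T, y t ≤ max (y 0) ξs + N₀ :=
  stmt_4_general T g hg y b b' hb'int hy hycont hb N₀ N₁ hbincr ξs hξs
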